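/- arXiv:1609.06561 — 4 statements merged into one kernel-verified Lean document; each statement's English description precedes it below -/
import Mathlib

section
/- Let σ1, σ2 > 0, ρ ∈ [−1,1], and let ψ11, ψ22, ψ12 : [0,∞) → ℝ be continuous functions with ψ_{ij}(0) = 1 that are three times continuously differentiable on (0,∞) and satisfy: (i) ψ11''(r) − r·ψ11'''(r) ≥ 0 and ψ22''(r) − r·ψ22'''(r) ≥ 0 for all r > 0; (ii) ψ_{ij}(r) → 0, r·ψ_{ij}'(r) → 0 and r²·ψ_{ij}''(r) → 0 as r → ∞ for all i,j ∈ {1,2}; (iii) the functions r ↦ r·ψ_{ij}''(r) − r²·ψ_{ij}'''(r) are (absolutely) integrable on (0,∞) for all i,j ∈ {1,2}; (iv) ρ²·(ψ12''(r) − r·ψ12'''(r))² ≤ (ψ11''(r) − r·ψ11'''(r))·(ψ22''(r) − r·ψ22'''(r)) for all r > 0. Then the matrix-valued function C : [0,∞) → ℝ^{2×2} with C11(r) = σ1²·ψ11(r), C22(r) = σ2²·ψ22(r), C12(r) = C21(r) = ρσ1σ2·ψ12(r) is positive definite in ℝ³. -/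
/-!
For every `t > 0` the function `r ↦ sphericalKernel r t`, the volume of the intersection of two
balls of diameter `t` whose centres are `r` apart divided by the volume of one ball, is positive
definite in `ℝ³`: the matrix `(vol (B(xᵢ, t/2) ∩ B(xⱼ, t/2)))ᵢⱼ` is the Gram matrix of the ball
indicators in `L²`. Two integrations by parts, whose boundary terms vanish by the decay
conditions, write each `ψ` as the mixture `ψ r = ∫₀^∞ w t * sphericalKernel r t dt` with
`w t = (t ψ'' t - t² ψ''' t) / 3`, and continuity extends this to `r = 0`. Hence
`C r = ∫₀^∞ sphericalKernel r t • W t dt`, where `W t` is a `2×2` matrix of such weights; `W t` is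
positive semidefinite by (i) and (iv), the block matrix `(sphericalKernel ‖xᵢ - xⱼ‖ t • W t)ᵢⱼ`
is a Kronecker product of positive semidefinite matrices, and integrating over `t` gives the
claim.
-/

open Matrix Set Filter MeasureTheory

noncomputable section

/-- A `2×2`-matrix-valued function `C` on `[0,∞)` is positive definite in `ℝⁿ` if for all
finitely many points `x₁,…,x_p ∈ ℝⁿ` and vectors `a₁,…,a_p ∈ ℝ²`,
`∑_{i,j} aᵢᵀ C(‖xᵢ - xⱼ‖) aⱼ ≥ 0`. -/
def PosDefIn (n : ℕ) (C : ℝ → Matrix (Fin 2) (Fin 2) ℝ) : Prop :=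
  ∀ (p : ℕ) (x : Fin p → EuclideanSpace ℝ (Fin n)) (a : Fin p → Fin 2 → ℝ),
    0 ≤ ∑ i : Fin p, ∑ j : Fin p, a i ⬝ᵥ (C ‖x i - x j‖).mulVec (a j)

open Real Metric Topology

def sphericalKernel (r t : ℝ) : ℝ :=
  if r < t then (1 - r / t) ^ 2 * (1 + r / (2 * t)) else 0

lemma sphericalKernel_of_lt {r t : ℝ} (h : r < t) :
    sphericalKernel r t = (1 - r / t) ^ 2 * (1 + r / (2 * t)) :=
  if_pos h

lemma sphericalKernel_of_le {r t : ℝ} (h : t ≤ r) : sphericalKernel r t = 0 :=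
  if_neg h.not_gt

lemma sphericalKernel_nonneg {r : ℝ} (hr : 0 ≤ r) (t : ℝ) : 0 ≤ sphericalKernel r t := by
  rcases lt_or_ge r t with h | h
  · have ht : 0 < t := hr.trans_lt h
    rw [sphericalKernel_of_lt h]
    positivity
  · rw [sphericalKernel_of_le h]

lemma norm_sphericalKernel_le_one {r : ℝ} (hr : 0 ≤ r) (t : ℝ) : ‖sphericalKernel r t‖ ≤ 1 := by
  rw [Real.norm_of_nonneg (sphericalKernel_nonneg hr t)]
  rcases lt_or_ge r t with h | h
  · have ht : 0 < t := hr.trans_lt h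
    have hu : r / t < 1 := (div_lt_one ht).2 h
    have hu0 : 0 ≤ r / t := by positivity
    rw [sphericalKernel_of_lt h, show r / (2 * t) = r / t / 2 by ring]
    nlinarith [sq_nonneg (r / t)]
  · rw [sphericalKernel_of_le h]
    exact zero_le_one

lemma measurable_sphericalKernel (r : ℝ) : Measurable (sphericalKernel r) :=
  Measurable.ite measurableSet_Ioi (by fun_prop) measurable_const

lemma integrableOn_mul_sphericalKernel {w : ℝ → ℝ} {s : Set ℝ} (hw : IntegrableOn w s) {r : ℝ}
    (hr : 0 ≤ r) : IntegrableOn (fun t => w t * sphericalKernel r t) s :=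
  hw.mul_bdd (measurable_sphericalKernel r).aestronglyMeasurable
    (ae_of_all _ fun t => norm_sphericalKernel_le_one hr t)

lemma continuousAt_sphericalKernel_zero {t : ℝ} (ht : 0 < t) :
    ContinuousAt (fun r => sphericalKernel r t) 0 := by
  have hpoly : Continuous fun r : ℝ => (1 - r / t) ^ 2 * (1 + r / (2 * t)) := by fun_prop
  refine hpoly.continuousAt.congr ?_
  filter_upwards [gt_mem_nhds ht] with r hr
  exact (sphericalKernel_of_lt hr).symm

lemma volume_setOf_sq_add_sq_le (c : ℝ) :
    volume {y : Fin 2 → ℝ | y 0 ^ 2 + y 1 ^ 2 ≤ c} = ENNReal.ofReal (π * c) := by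
  rcases lt_or_ge c 0 with hc | hc
  · have hempty : {y : Fin 2 → ℝ | y 0 ^ 2 + y 1 ^ 2 ≤ c} = ∅ :=
      eq_empty_of_forall_notMem fun y hy => by
        nlinarith [sq_nonneg (y 0), sq_nonneg (y 1), hy.out]
    rw [hempty, measure_empty, ENNReal.ofReal_of_nonpos (by nlinarith [pi_pos])]
  · have hpre : (MeasurableEquiv.toLp 2 (Fin 2 → ℝ)).symm ⁻¹' {y | y 0 ^ 2 + y 1 ^ 2 ≤ c}
        = closedBall (0 : EuclideanSpace ℝ (Fin 2)) √c := by
      ext z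
      simp [EuclideanSpace.norm_eq, Fin.sum_univ_two, Real.sqrt_le_sqrt_iff hc]
    rw [← (EuclideanSpace.volume_preserving_symm_measurableEquiv_toLp (Fin 2)).measure_preimage
      (by measurability), hpre, EuclideanSpace.volume_closedBall_fin_two,
      ← ENNReal.ofReal_pow (Real.sqrt_nonneg c), Real.sq_sqrt hc, ← ENNReal.ofReal_mul hc, mul_comm]

lemma integral_lens_slice_area {R d : ℝ} (hR : 0 < R) (hd : 0 ≤ d) :
    ∫ s, max 0 (π * (R ^ 2 - max (s ^ 2) ((s - d) ^ 2))) =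
      4 / 3 * π * R ^ 3 * sphericalKernel d (2 * R) := by
  have hslice_zero : ∀ s, R ^ 2 ≤ max (s ^ 2) ((s - d) ^ 2) →
      max 0 (π * (R ^ 2 - max (s ^ 2) ((s - d) ^ 2))) = 0 := fun s hs =>
    max_eq_left (mul_nonpos_of_nonneg_of_nonpos pi_pos.le (by linarith))
  rcases le_or_gt (2 * R) d with hRd | hdR
  · rw [sphericalKernel_of_le hRd, mul_zero]
    refine (integral_congr_ae (ae_of_all _ fun s => hslice_zero s ?_)).trans (integral_zero ℝ ℝ)
    nlinarith [le_max_left (s ^ 2) ((s - d) ^ 2), le_max_right (s ^ 2) ((s - d) ^ 2),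
      sq_nonneg (2 * s - d)]
  have hvan : ∀ s ∉ Icc (d - R) R, max 0 (π * (R ^ 2 - max (s ^ 2) ((s - d) ^ 2))) = 0 := by
    intro s hs
    refine hslice_zero s ?_
    simp only [mem_Icc, not_and_or, not_le] at hs
    rcases hs with h | h
    · nlinarith [le_max_right (s ^ 2) ((s - d) ^ 2)]
    · nlinarith [le_max_left (s ^ 2) ((s - d) ^ 2)]
  have hcont : Continuous fun s : ℝ => max 0 (π * (R ^ 2 - max (s ^ 2) ((s - d) ^ 2))) := by
    fun_prop
  have hleft : ∫ s in (d - R)..(d / 2), max 0 (π * (R ^ 2 - max (s ^ 2) ((s - d) ^ 2))) =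
      π * (R ^ 2 * (R - d / 2) - (R ^ 3 - d ^ 3 / 8) / 3) := by
    rw [intervalIntegral.integral_congr (g := fun s => π * (R ^ 2 - (s - d) ^ 2)),
      intervalIntegral.integral_const_mul, intervalIntegral.integral_sub intervalIntegrable_const
        (by apply Continuous.intervalIntegrable; fun_prop)]
    · simp [intervalIntegral.integral_comp_sub_right (fun x : ℝ => x ^ 2)]
      ring
    intro s hs
    rw [uIcc_of_le (by linarith), mem_Icc] at hs
    dsimp only
    rw [max_eq_right (show s ^ 2 ≤ (s - d) ^ 2 by nlinarith),
      max_eq_right (mul_nonneg pi_pos.le (by nlinarith))]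
  have hright : ∫ s in (d / 2)..R, max 0 (π * (R ^ 2 - max (s ^ 2) ((s - d) ^ 2))) =
      π * (R ^ 2 * (R - d / 2) - (R ^ 3 - d ^ 3 / 8) / 3) := by
    rw [intervalIntegral.integral_congr (g := fun s => π * (R ^ 2 - s ^ 2)),
      intervalIntegral.integral_const_mul, intervalIntegral.integral_sub intervalIntegrable_const
        (by apply Continuous.intervalIntegrable; fun_prop)]
    · simp
      ring
    intro s hs
    rw [uIcc_of_le (by linarith), mem_Icc] at hs
    dsimp only
    rw [max_eq_left (show (s - d) ^ 2 ≤ s ^ 2 by nlinarith),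
      max_eq_right (mul_nonneg pi_pos.le (by nlinarith))]
  rw [← setIntegral_eq_integral_of_forall_compl_eq_zero hvan, integral_Icc_eq_integral_Ioc,
    ← intervalIntegral.integral_of_le (by linarith),
    ← intervalIntegral.integral_add_adjacent_intervals (b := d / 2)
      (hcont.intervalIntegrable _ _) (hcont.intervalIntegrable _ _),
    hleft, hright, sphericalKernel_of_lt hdR]
  field_simp
  ring

lemma volume_lens {R d : ℝ} (hR : 0 < R) (hd : 0 ≤ d) :
    volume {z : Fin 3 → ℝ | z 0 ^ 2 + z 1 ^ 2 + z 2 ^ 2 ≤ R ^ 2 ∧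
      (z 0 - d) ^ 2 + z 1 ^ 2 + z 2 ^ 2 ≤ R ^ 2} =
      ENNReal.ofReal (4 / 3 * π * R ^ 3 * sphericalKernel d (2 * R)) := by
  set B : Set (ℝ × (Fin 2 → ℝ)) :=
    {q | q.1 ^ 2 + q.2 0 ^ 2 + q.2 1 ^ 2 ≤ R ^ 2 ∧ (q.1 - d) ^ 2 + q.2 0 ^ 2 + q.2 1 ^ 2 ≤ R ^ 2}
  have hB : MeasurableSet B := by
    simp only [B, ofPred_and]
    exact (measurableSet_le (by fun_prop) measurable_const).inter
      (measurableSet_le (by fun_prop) measurable_const)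
  have hslice : ∀ s : ℝ, Prod.mk s ⁻¹' B =
      {y : Fin 2 → ℝ | y 0 ^ 2 + y 1 ^ 2 ≤ R ^ 2 - max (s ^ 2) ((s - d) ^ 2)} := by
    intro s
    ext y
    simp only [B, mem_preimage, mem_ofPred_eq, le_sub_comm, max_le_iff]
    constructor <;> rintro ⟨h1, h2⟩ <;> constructor <;> linarith
  have hslice_int : Integrable fun s : ℝ => max 0 (π * (R ^ 2 - max (s ^ 2) ((s - d) ^ 2))) := by
    refine Continuous.integrable_of_hasCompactSupport (by fun_prop)
      (HasCompactSupport.intro (isCompact_Icc (a := -R) (b := R)) fun s hs => ?_)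
    refine max_eq_left (mul_nonpos_of_nonneg_of_nonpos pi_pos.le ?_)
    simp only [mem_Icc, not_and_or, not_le] at hs
    have : R ^ 2 < s ^ 2 := by rcases hs with h | h <;> nlinarith
    linarith [le_max_left (s ^ 2) ((s - d) ^ 2)]
  have hpre : MeasurableEquiv.piFinSuccAbove (fun _ : Fin 3 => ℝ) 0 ⁻¹' B =
      {z : Fin 3 → ℝ | z 0 ^ 2 + z 1 ^ 2 + z 2 ^ 2 ≤ R ^ 2 ∧
        (z 0 - d) ^ 2 + z 1 ^ 2 + z 2 ^ 2 ≤ R ^ 2} := by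
    ext z
    simp [B, Fin.tail]
  rw [← hpre, (volume_preserving_piFinSuccAbove (fun _ : Fin 3 => ℝ) 0).measure_preimage
      hB.nullMeasurableSet, Measure.volume_eq_prod, Measure.prod_apply hB]
  · calc ∫⁻ s, volume (Prod.mk s ⁻¹' B)
        = ∫⁻ s, ENNReal.ofReal (max 0 (π * (R ^ 2 - max (s ^ 2) ((s - d) ^ 2)))) := by
          refine lintegral_congr fun s => ?_
          rw [hslice, volume_setOf_sq_add_sq_le, ENNReal.ofReal_max, ENNReal.ofReal_zero,
            zero_max]
      _ = ENNReal.ofReal (4 / 3 * π * R ^ 3 * sphericalKernel d (2 * R)) := by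
          rw [← ofReal_integral_eq_lintegral_ofReal hslice_int
            (ae_of_all _ fun s => le_max_left _ _), integral_lens_slice_area hR hd]

lemma volume_closedBall_inter_closedBall {R : ℝ} (hR : 0 < R) (x y : EuclideanSpace ℝ (Fin 3)) :
    volume (closedBall x R ∩ closedBall y R) =
      ENNReal.ofReal (4 / 3 * π * R ^ 3 * sphericalKernel ‖x - y‖ (2 * R)) := by
  set d := ‖x - y‖
  set e₀ : EuclideanSpace ℝ (Fin 3) := EuclideanSpace.single 0 1
  have hd : ‖y - x‖ = ‖d • e₀‖ := by simp [e₀, d, norm_sub_rev, norm_smul, PiLp.norm_single]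
  -- a reflection moves `y - x` onto the first axis
  set e := Submodule.reflection (ℝ ∙ (y - x - d • e₀))ᗮ
  have hey : e (y - x) = d • e₀ := Submodule.reflection_sub hd
  have hφ : MeasurePreserving (fun z => (MeasurableEquiv.toLp 2 (Fin 3 → ℝ)).symm (e (z - x))) :=
    (EuclideanSpace.volume_preserving_symm_measurableEquiv_toLp (Fin 3)).comp
      (e.measurePreserving.comp (measurePreserving_sub_right volume x))
  have hball : ∀ w : EuclideanSpace ℝ (Fin 3), ‖w‖ ≤ R ↔ w 0 ^ 2 + w 1 ^ 2 + w 2 ^ 2 ≤ R ^ 2 := by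
    intro w
    rw [EuclideanSpace.norm_eq, Real.sqrt_le_left hR.le, Fin.sum_univ_three]
    simp
  have hpre : (fun z => (MeasurableEquiv.toLp 2 (Fin 3 → ℝ)).symm (e (z - x))) ⁻¹'
      {z : Fin 3 → ℝ | z 0 ^ 2 + z 1 ^ 2 + z 2 ^ 2 ≤ R ^ 2 ∧
        (z 0 - d) ^ 2 + z 1 ^ 2 + z 2 ^ 2 ≤ R ^ 2} = closedBall x R ∩ closedBall y R := by
    ext z
    have hz : e (z - x) - d • e₀ = e (z - y) := by
      rw [← hey, ← map_sub, sub_sub_sub_cancel_right]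
    simp only [mem_preimage]
    rw [mem_inter_iff, mem_closedBall, mem_closedBall, dist_eq_norm, dist_eq_norm,
      ← e.norm_map, ← e.norm_map (z - y), ← hz, hball, hball]
    generalize e (z - x) = w
    simp [e₀]
  rw [← hpre, hφ.measure_preimage (by measurability), volume_lens hR (norm_nonneg _)]

lemma posSemidef_sphericalKernel {ι : Type*} [Fintype ι] {t : ℝ} (ht : 0 < t)
    (x : ι → EuclideanSpace ℝ (Fin 3)) :
    (Matrix.of fun i j => sphericalKernel ‖x i - x j‖ t).PosSemidef := by
  have hR : 0 < t / 2 := by positivity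
  have hgram := posSemidef_matrix_measure_inter (μ := volume)
    (s := fun i => closedBall (x i) (t / 2)) (fun _ => measurableSet_closedBall)
    (fun _ => measure_closedBall_lt_top.ne)
  have hscale : (Matrix.of fun i j => sphericalKernel ‖x i - x j‖ t) =
      (4 / 3 * π * (t / 2) ^ 3)⁻¹ •
        Matrix.of fun i j => volume.real (closedBall (x i) (t / 2) ∩ closedBall (x j) (t / 2)) := by
    ext i j
    have hK := sphericalKernel_nonneg (norm_nonneg (x i - x j)) t
    simp only [of_apply, Matrix.smul_apply, smul_eq_mul, measureReal_def,
      volume_closedBall_inter_closedBall hR, mul_div_cancel₀ t two_ne_zero]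
    rw [ENNReal.toReal_ofReal (by positivity)]
    field_simp
  rw [hscale]
  exact hgram.smul (by positivity)

def sphericalWeight (f : ℝ → ℝ) (t : ℝ) : ℝ :=
  (t * deriv (deriv f) t - t ^ 2 * deriv (deriv (deriv f)) t) / 3

def sphericalPrimitive (f : ℝ → ℝ) (r t : ℝ) : ℝ :=
  -f t + (t - r) * deriv f t - (t ^ 2 / 3 - r * t / 2 + r ^ 3 / 6 * t⁻¹) * deriv (deriv f) t

lemma sphericalWeight_eq_mul (f : ℝ → ℝ) (t : ℝ) :
    sphericalWeight f t = t / 3 * (deriv (deriv f) t - t * deriv (deriv (deriv f)) t) := by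
  unfold sphericalWeight
  ring

section Representation

variable {f : ℝ → ℝ}

lemma hasDerivAt_sphericalPrimitive (hf : ContDiffOn ℝ 3 f (Ioi 0)) (r : ℝ) {t : ℝ} (ht : 0 < t) :
    HasDerivAt (sphericalPrimitive f r)
      (sphericalWeight f t * ((1 - r / t) ^ 2 * (1 + r / (2 * t)))) t := by
  have hnhds : Ioi (0 : ℝ) ∈ 𝓝 t := Ioi_mem_nhds ht
  have hf1 : ContDiffOn ℝ 2 (deriv f) (Ioi 0) := hf.deriv_of_isOpen isOpen_Ioi (by norm_num)
  have hf2 : ContDiffOn ℝ 1 (deriv (deriv f)) (Ioi 0) :=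
    hf1.deriv_of_isOpen isOpen_Ioi (by norm_num)
  have d0 := ((hf.contDiffAt hnhds).differentiableAt (by norm_num)).hasDerivAt
  have d1 := ((hf1.contDiffAt hnhds).differentiableAt (by norm_num)).hasDerivAt
  have d2 := ((hf2.contDiffAt hnhds).differentiableAt (by norm_num)).hasDerivAt
  have hq : HasDerivAt (fun u : ℝ => u ^ 2 / 3 - r * u / 2 + r ^ 3 / 6 * u⁻¹)
      (2 * t / 3 - r / 2 + r ^ 3 / 6 * -(t ^ 2)⁻¹) t := by
    simpa using (((hasDerivAt_pow 2 t).div_const 3).fun_sub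
      (((hasDerivAt_id' t).const_mul r).div_const 2)).fun_add
        ((hasDerivAt_inv ht.ne').const_mul (r ^ 3 / 6))
  refine ((d0.fun_neg.fun_add (((hasDerivAt_id' t).sub_const r).mul d1)).fun_sub
    (hq.mul d2)).congr_deriv ?_
  unfold sphericalWeight
  field_simp
  ring

lemma tendsto_sphericalPrimitive_atTop (r : ℝ) (hf0 : Tendsto f atTop (𝓝 0))
    (hf1 : Tendsto (fun t => t * deriv f t) atTop (𝓝 0))
    (hf2 : Tendsto (fun t => t ^ 2 * deriv (deriv f) t) atTop (𝓝 0)) :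
    Tendsto (sphericalPrimitive f r) atTop (𝓝 0) := by
  have hinv : Tendsto (fun t : ℝ => t⁻¹) atTop (𝓝 0) := tendsto_inv_atTop_zero
  have hlim := (hf0.neg.add
    (((tendsto_const_nhds (x := (1 : ℝ))).sub (hinv.const_mul r)).mul hf1)).sub
      ((((tendsto_const_nhds (x := (1 / 3 : ℝ))).sub (hinv.const_mul (r / 2))).add
        ((hinv.pow 3).const_mul (r ^ 3 / 6))).mul hf2)
  simp only [neg_zero, mul_zero, sub_zero, zero_add, zero_pow three_ne_zero] at hlim
  refine hlim.congr' ?_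
  filter_upwards [eventually_ne_atTop 0] with t ht
  unfold sphericalPrimitive
  field_simp

lemma sphericalPrimitive_self (r : ℝ) : sphericalPrimitive f r r = -f r := by
  unfold sphericalPrimitive
  field_simp
  ring

lemma integral_sphericalWeight_mul_sphericalKernel_of_pos (hf : ContDiffOn ℝ 3 f (Ioi 0))
    (hf0 : Tendsto f atTop (𝓝 0)) (hf1 : Tendsto (fun t => t * deriv f t) atTop (𝓝 0))
    (hf2 : Tendsto (fun t => t ^ 2 * deriv (deriv f) t) atTop (𝓝 0))
    (hw : IntegrableOn (sphericalWeight f) (Ioi 0)) {r : ℝ} (hr : 0 < r) :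
    ∫ t in Ioi 0, sphericalWeight f t * sphericalKernel r t = f r := by
  have hsupp : ∫ t in Ioi 0, sphericalWeight f t * sphericalKernel r t =
      ∫ t in Ioi r, sphericalWeight f t * sphericalKernel r t :=
    setIntegral_eq_of_subset_of_forall_sdiff_eq_zero measurableSet_Ioi (Ioi_subset_Ioi hr.le)
      fun t ht => by rw [sphericalKernel_of_le (not_lt.1 ht.2), mul_zero]
  rw [hsupp, integral_Ioi_of_hasDerivAt_of_tendsto
    (hasDerivAt_sphericalPrimitive hf r hr).continuousAt.continuousWithinAt
    (fun t ht => sphericalKernel_of_lt ht ▸ hasDerivAt_sphericalPrimitive hf r (hr.trans ht))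
    ((integrableOn_mul_sphericalKernel hw hr.le).mono_set (Ioi_subset_Ioi hr.le))
    (tendsto_sphericalPrimitive_atTop r hf0 hf1 hf2), sphericalPrimitive_self, sub_neg_eq_add,
    zero_add]

lemma tendsto_integral_mul_sphericalKernel_nhdsGT_zero {w : ℝ → ℝ} (hw : IntegrableOn w (Ioi 0)) :
    Tendsto (fun r => ∫ t in Ioi 0, w t * sphericalKernel r t) (𝓝[>] 0)
      (𝓝 (∫ t in Ioi 0, w t * sphericalKernel 0 t)) := by
  refine tendsto_integral_filter_of_dominated_convergence (fun t => ‖w t‖) ?_ ?_ hw.norm ?_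
  · exact Eventually.of_forall fun r =>
      hw.aestronglyMeasurable.mul (measurable_sphericalKernel r).aestronglyMeasurable
  · filter_upwards [self_mem_nhdsWithin] with r hr
    refine ae_of_all _ fun t => ?_
    rw [norm_mul]
    exact mul_le_of_le_one_right (norm_nonneg _) (norm_sphericalKernel_le_one (le_of_lt hr) t)
  · filter_upwards [ae_restrict_mem measurableSet_Ioi] with t ht
    exact ((continuousAt_sphericalKernel_zero ht).tendsto.mono_left nhdsWithin_le_nhds).const_mul _

lemma integral_sphericalWeight_mul_sphericalKernel (hf : ContDiffOn ℝ 3 f (Ioi 0))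
    (hf_zero : ContinuousWithinAt f (Ioi 0) 0)
    (hf0 : Tendsto f atTop (𝓝 0)) (hf1 : Tendsto (fun t => t * deriv f t) atTop (𝓝 0))
    (hf2 : Tendsto (fun t => t ^ 2 * deriv (deriv f) t) atTop (𝓝 0))
    (hw : IntegrableOn (sphericalWeight f) (Ioi 0)) {r : ℝ} (hr : 0 ≤ r) :
    ∫ t in Ioi 0, sphericalWeight f t * sphericalKernel r t = f r := by
  rcases hr.lt_or_eq with hr | rfl
  · exact integral_sphericalWeight_mul_sphericalKernel_of_pos hf hf0 hf1 hf2 hw hr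
  -- at `r = 0` both sides are the right limits of the positive case
  refine tendsto_nhds_unique (tendsto_integral_mul_sphericalKernel_nhdsGT_zero hw) ?_
  refine hf_zero.tendsto.congr' ?_
  filter_upwards [self_mem_nhdsWithin] with r hr
  exact (integral_sphericalWeight_mul_sphericalKernel_of_pos hf hf0 hf1 hf2 hw hr).symm

end Representation

lemma sum_mul_dotProduct_mulVec_nonneg {ι n : Type*} [Fintype ι] [Fintype n]
    {K : Matrix ι ι ℝ} {M : Matrix n n ℝ} (hK : K.PosSemidef) (hM : M.PosSemidef)
    (a : ι → n → ℝ) : 0 ≤ ∑ i, ∑ j, K i j * (a i ⬝ᵥ M *ᵥ a j) := by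
  refine ((hK.kronecker hM).dotProduct_mulVec_nonneg fun p => a p.1 p.2).trans_eq ?_
  simp only [dotProduct, mulVec, kroneckerMap_apply, Fintype.sum_prod_type, Finset.mul_sum,
    star_trivial]
  refine Finset.sum_congr rfl fun i _ => ?_
  rw [Finset.sum_comm]
  refine Finset.sum_congr rfl fun j _ => Finset.sum_congr rfl fun k _ =>
    Finset.sum_congr rfl fun l _ => ?_
  ring

lemma posSemidef_fin_two_of_sq_le_mul {a b c : ℝ} (ha : 0 ≤ a) (hc : 0 ≤ c) (hb : b ^ 2 ≤ a * c) :
    (!![a, b; b, c]).PosSemidef := by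
  refine .of_dotProduct_mulVec_nonneg ?_ fun x => ?_
  · ext i j
    fin_cases i <;> fin_cases j <;> rfl
  · simp only [star_trivial, dotProduct, mulVec, Fin.sum_univ_two, cons_val_zero, cons_val_one,
      of_apply, cons_val', empty_val', cons_val_fin_one]
    have key : 0 ≤ (a + c) * (x 0 * (a * x 0 + b * x 1) + x 1 * (b * x 0 + c * x 1)) := by
      nlinarith [sq_nonneg (a * x 0 + b * x 1), sq_nonneg (b * x 0 + c * x 1),
        mul_nonneg (sub_nonneg.2 hb) (add_nonneg (sq_nonneg (x 0)) (sq_nonneg (x 1)))]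
    rcases (add_nonneg ha hc).eq_or_lt with hac | hac
    · have ha0 : a = 0 := by linarith
      have hc0 : c = 0 := by linarith
      have hb0 : b = 0 := by nlinarith
      simp [ha0, hb0, hc0]
    · exact (mul_nonneg_iff_of_pos_left hac).1 key

lemma mul_dotProduct_mulVec_eq_sum {n : Type*} [Fintype n] (c : ℝ) (M : Matrix n n ℝ)
    (u v : n → ℝ) : c * (u ⬝ᵥ M *ᵥ v) = ∑ k, ∑ l, u k * v l * (M k l * c) := by
  simp only [dotProduct, mulVec, Finset.mul_sum]
  exact Finset.sum_congr rfl fun k _ => Finset.sum_congr rfl fun l _ => by ring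

section Mixture

variable {W : ℝ → Matrix (Fin 2) (Fin 2) ℝ}

lemma integrableOn_sphericalKernel_mul_dotProduct_mulVec
    (hW_int : ∀ k l, IntegrableOn (fun t => W t k l) (Ioi 0)) {r : ℝ} (hr : 0 ≤ r)
    (u v : Fin 2 → ℝ) :
    IntegrableOn (fun t => sphericalKernel r t * (u ⬝ᵥ W t *ᵥ v)) (Ioi 0) := by
  simp_rw [mul_dotProduct_mulVec_eq_sum]
  exact integrable_finsetSum _ fun k _ => integrable_finsetSum _ fun l _ =>
    (integrableOn_mul_sphericalKernel (hW_int k l) hr).const_mul _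

lemma dotProduct_mulVec_eq_integral_sphericalKernel
    (hW_int : ∀ k l, IntegrableOn (fun t => W t k l) (Ioi 0)) {r : ℝ} (hr : 0 ≤ r)
    (u v : Fin 2 → ℝ) :
    u ⬝ᵥ (Matrix.of fun k l => ∫ t in Ioi 0, W t k l * sphericalKernel r t) *ᵥ v =
      ∫ t in Ioi 0, sphericalKernel r t * (u ⬝ᵥ W t *ᵥ v) := by
  have hint k l := (integrableOn_mul_sphericalKernel (hW_int k l) hr).const_mul (u k * v l)
  simp_rw [mul_dotProduct_mulVec_eq_sum]
  rw [integral_finsetSum _ fun k _ => integrable_finsetSum _ fun l _ => hint k l]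
  simp only [dotProduct, mulVec, of_apply, Finset.mul_sum]
  refine Finset.sum_congr rfl fun k _ => ?_
  rw [integral_finsetSum _ fun l _ => hint k l]
  refine Finset.sum_congr rfl fun l _ => ?_
  rw [integral_const_mul]
  ring

theorem posDefIn_three_of_integral_sphericalKernel {C : ℝ → Matrix (Fin 2) (Fin 2) ℝ}
    (hW : ∀ t > 0, (W t).PosSemidef) (hW_int : ∀ k l, IntegrableOn (fun t => W t k l) (Ioi 0))
    (hC : ∀ r ≥ 0, C r = Matrix.of fun k l => ∫ t in Ioi 0, W t k l * sphericalKernel r t) :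
    PosDefIn 3 C := by
  intro p x a
  have hint i j := integrableOn_sphericalKernel_mul_dotProduct_mulVec hW_int
    (norm_nonneg (x i - x j)) (a i) (a j)
  calc 0 ≤ ∫ t in Ioi 0, ∑ i, ∑ j, sphericalKernel ‖x i - x j‖ t * (a i ⬝ᵥ W t *ᵥ a j) :=
        setIntegral_nonneg measurableSet_Ioi fun t ht =>
          sum_mul_dotProduct_mulVec_nonneg (posSemidef_sphericalKernel ht x) (hW t ht) a
    _ = ∑ i, ∑ j, a i ⬝ᵥ C ‖x i - x j‖ *ᵥ a j := by
        rw [integral_finsetSum _ fun i _ => integrable_finsetSum _ fun j _ => hint i j]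
        refine Finset.sum_congr rfl fun i _ => ?_
        rw [integral_finsetSum _ fun j _ => hint i j]
        refine Finset.sum_congr rfl fun j _ => ?_
        rw [hC _ (norm_nonneg _),
          dotProduct_mulVec_eq_integral_sphericalKernel hW_int (norm_nonneg _)]

end Mixture

theorem bivariate_sufficient_R3_general
    (σ1 σ2 ρ : ℝ)
    (ψ11 ψ22 ψ12 : ℝ → ℝ)
    (hcont11 : ContinuousOn ψ11 (Ici 0)) (hcont22 : ContinuousOn ψ22 (Ici 0))
    (hcont12 : ContinuousOn ψ12 (Ici 0))
    (hC11 : ContDiffOn ℝ 3 ψ11 (Ioi 0)) (hC22 : ContDiffOn ℝ 3 ψ22 (Ioi 0))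
    (hC12 : ContDiffOn ℝ 3 ψ12 (Ioi 0))
    (hconv11 : ∀ r > (0 : ℝ), 0 ≤ deriv (deriv ψ11) r - r * deriv (deriv (deriv ψ11)) r)
    (hconv22 : ∀ r > (0 : ℝ), 0 ≤ deriv (deriv ψ22) r - r * deriv (deriv (deriv ψ22)) r)
    (hlim11 : Tendsto ψ11 atTop (nhds 0)) (hlim22 : Tendsto ψ22 atTop (nhds 0))
    (hlim12 : Tendsto ψ12 atTop (nhds 0))
    (hlim11' : Tendsto (fun r => r * deriv ψ11 r) atTop (nhds 0))
    (hlim22' : Tendsto (fun r => r * deriv ψ22 r) atTop (nhds 0))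
    (hlim12' : Tendsto (fun r => r * deriv ψ12 r) atTop (nhds 0))
    (hlim11'' : Tendsto (fun r => r ^ 2 * deriv (deriv ψ11) r) atTop (nhds 0))
    (hlim22'' : Tendsto (fun r => r ^ 2 * deriv (deriv ψ22) r) atTop (nhds 0))
    (hlim12'' : Tendsto (fun r => r ^ 2 * deriv (deriv ψ12) r) atTop (nhds 0))
    (hint11 : IntegrableOn
      (fun r => r * deriv (deriv ψ11) r - r ^ 2 * deriv (deriv (deriv ψ11)) r) (Ioi 0))
    (hint22 : IntegrableOn
      (fun r => r * deriv (deriv ψ22) r - r ^ 2 * deriv (deriv (deriv ψ22)) r) (Ioi 0))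
    (hint12 : IntegrableOn
      (fun r => r * deriv (deriv ψ12) r - r ^ 2 * deriv (deriv (deriv ψ12)) r) (Ioi 0))
    (hineq : ∀ r > (0 : ℝ),
      ρ ^ 2 * (deriv (deriv ψ12) r - r * deriv (deriv (deriv ψ12)) r) ^ 2 ≤
        (deriv (deriv ψ11) r - r * deriv (deriv (deriv ψ11)) r) *
        (deriv (deriv ψ22) r - r * deriv (deriv (deriv ψ22)) r)) :
    PosDefIn 3 (fun r =>
      !![σ1 ^ 2 * ψ11 r, ρ * σ1 * σ2 * ψ12 r;
         ρ * σ1 * σ2 * ψ12 r, σ2 ^ 2 * ψ22 r]) := by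
  have hw11 : IntegrableOn (sphericalWeight ψ11) (Ioi 0) := hint11.div_const 3
  have hw22 : IntegrableOn (sphericalWeight ψ22) (Ioi 0) := hint22.div_const 3
  have hw12 : IntegrableOn (sphericalWeight ψ12) (Ioi 0) := hint12.div_const 3
  have hψ11 {r : ℝ} (hr : 0 ≤ r) := integral_sphericalWeight_mul_sphericalKernel hC11
    ((hcont11 0 self_mem_Ici).mono Ioi_subset_Ici_self) hlim11 hlim11' hlim11'' hw11 hr
  have hψ22 {r : ℝ} (hr : 0 ≤ r) := integral_sphericalWeight_mul_sphericalKernel hC22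
    ((hcont22 0 self_mem_Ici).mono Ioi_subset_Ici_self) hlim22 hlim22' hlim22'' hw22 hr
  have hψ12 {r : ℝ} (hr : 0 ≤ r) := integral_sphericalWeight_mul_sphericalKernel hC12
    ((hcont12 0 self_mem_Ici).mono Ioi_subset_Ici_self) hlim12 hlim12' hlim12'' hw12 hr
  refine posDefIn_three_of_integral_sphericalKernel (W := fun t =>
    !![σ1 ^ 2 * sphericalWeight ψ11 t, ρ * σ1 * σ2 * sphericalWeight ψ12 t;
       ρ * σ1 * σ2 * sphericalWeight ψ12 t, σ2 ^ 2 * sphericalWeight ψ22 t])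
    (fun t ht => ?_) (fun k l => ?_) (fun r hr => ?_)
  · simp only [sphericalWeight_eq_mul]
    refine posSemidef_fin_two_of_sq_le_mul (by have := hconv11 t ht; positivity)
      (by have := hconv22 t ht; positivity) ?_
    linear_combination mul_le_mul_of_nonneg_left (hineq t ht) (sq_nonneg (σ1 * σ2 * (t / 3)))
  · fin_cases k <;> fin_cases l
    exacts [hw11.const_mul _, hw12.const_mul _, hw12.const_mul _, hw22.const_mul _]
  · ext k l
    fin_cases k <;> fin_cases l <;>
      simp [mul_assoc, integral_const_mul, hψ11 hr, hψ22 hr, hψ12 hr]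

/-- General sufficient condition for positive definiteness of a bivariate model in `ℝ³`. -/
theorem bivariate_sufficient_R3
    (σ1 σ2 ρ : ℝ) (hσ1 : 0 < σ1) (hσ2 : 0 < σ2) (hρ : ρ ∈ Icc (-1 : ℝ) 1)
    (ψ11 ψ22 ψ12 : ℝ → ℝ)
    (hcont11 : ContinuousOn ψ11 (Ici 0)) (hcont22 : ContinuousOn ψ22 (Ici 0))
    (hcont12 : ContinuousOn ψ12 (Ici 0))
    (h011 : ψ11 0 = 1) (h022 : ψ22 0 = 1) (h012 : ψ12 0 = 1)
    (hC11 : ContDiffOn ℝ 3 ψ11 (Ioi 0)) (hC22 : ContDiffOn ℝ 3 ψ22 (Ioi 0))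
    (hC12 : ContDiffOn ℝ 3 ψ12 (Ioi 0))
    (hconv11 : ∀ r > (0 : ℝ), 0 ≤ deriv (deriv ψ11) r - r * deriv (deriv (deriv ψ11)) r)
    (hconv22 : ∀ r > (0 : ℝ), 0 ≤ deriv (deriv ψ22) r - r * deriv (deriv (deriv ψ22)) r)
    (hlim11 : Tendsto ψ11 atTop (nhds 0)) (hlim22 : Tendsto ψ22 atTop (nhds 0))
    (hlim12 : Tendsto ψ12 atTop (nhds 0))
    (hlim11' : Tendsto (fun r => r * deriv ψ11 r) atTop (nhds 0))
    (hlim22' : Tendsto (fun r => r * deriv ψ22 r) atTop (nhds 0))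
    (hlim12' : Tendsto (fun r => r * deriv ψ12 r) atTop (nhds 0))
    (hlim11'' : Tendsto (fun r => r ^ 2 * deriv (deriv ψ11) r) atTop (nhds 0))
    (hlim22'' : Tendsto (fun r => r ^ 2 * deriv (deriv ψ22) r) atTop (nhds 0))
    (hlim12'' : Tendsto (fun r => r ^ 2 * deriv (deriv ψ12) r) atTop (nhds 0))
    (hint11 : IntegrableOn
      (fun r => r * deriv (deriv ψ11) r - r ^ 2 * deriv (deriv (deriv ψ11)) r) (Ioi 0))
    (hint22 : IntegrableOn
      (fun r => r * deriv (deriv ψ22) r - r ^ 2 * deriv (deriv (deriv ψ22)) r) (Ioi 0))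
    (hint12 : IntegrableOn
      (fun r => r * deriv (deriv ψ12) r - r ^ 2 * deriv (deriv (deriv ψ12)) r) (Ioi 0))
    (hineq : ∀ r > (0 : ℝ),
      ρ ^ 2 * (deriv (deriv ψ12) r - r * deriv (deriv (deriv ψ12)) r) ^ 2 ≤
        (deriv (deriv ψ11) r - r * deriv (deriv (deriv ψ11)) r) *
        (deriv (deriv ψ22) r - r * deriv (deriv (deriv ψ22)) r)) :
    PosDefIn 3 (fun r =>
      !![σ1 ^ 2 * ψ11 r, ρ * σ1 * σ2 * ψ12 r;
         ρ * σ1 * σ2 * ψ12 r, σ2 ^ 2 * ψ22 r]) :=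
  bivariate_sufficient_R3_general σ1 σ2 ρ ψ11 ψ22 ψ12 hcont11 hcont22 hcont12 hC11 hC22 hC12 hconv11
    hconv22 hlim11 hlim22 hlim12 hlim11' hlim22' hlim12' hlim11'' hlim22'' hlim12'' hint11 hint22
    hint12 hineq
end
end

section
/- Let ψ : [0,∞) → ℝ be continuous with ψ(0) = 1, twice continuously differentiable on (0,∞), and suppose that ψ''(r) ≥ 0 for all r > 0, ψ(r) → 0 and r·ψ'(r) → 0 as r → ∞, and that lim_{r→0+} r·ψ'(r) exists and is finite. Then the function u ↦ u·ψ''(u) is (absolutely) integrable on (0,∞), i.e. ∫_0^∞ |u·ψ''(u)| du < ∞. -/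
open Set Filter MeasureTheory Topology

theorem integrableOn_Ioi_deriv_of_nonneg_of_tendsto_nhdsGT {g g' : ℝ → ℝ} {a l₀ l : ℝ}
    (hg₀ : Tendsto g (𝓝[>] a) (𝓝 l₀)) (hderiv : ∀ x ∈ Ioi a, HasDerivAt g (g' x) x)
    (g'pos : ∀ x ∈ Ioi a, 0 ≤ g' x) (hg : Tendsto g atTop (𝓝 l)) :
    IntegrableOn g' (Ioi a) := by
  classical
  -- Redefining `g` at `a` as its right limit makes it continuous on `[a, ∞)`.
  refine integrableOn_Ioi_deriv_of_nonneg (g := Function.update g a l₀) ?_ (fun x hx => ?_)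
    g'pos (hg.congr' ?_)
  · rwa [continuousWithinAt_update_same, Ici_sdiff_left]
  · refine (hderiv x hx).congr_of_eventuallyEq ?_
    filter_upwards [eventually_ne_nhds (ne_of_gt hx)] with y hy
    exact Function.update_of_ne hy _ _
  · filter_upwards [eventually_ne_atTop a] with y hy
    exact (Function.update_of_ne hy _ _).symm

theorem hasDerivAt_mul_deriv_sub {f : ℝ → ℝ} {x : ℝ} (hf : DifferentiableAt ℝ f x)
    (hf' : DifferentiableAt ℝ (deriv f) x) :
    HasDerivAt (fun u => u * deriv f u - f u) (x * deriv (deriv f) x) x := by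
  have h : HasDerivAt (fun u => u * deriv f u - f u)
      (1 * deriv f x + x * deriv (deriv f) x - deriv f x) x :=
    ((hasDerivAt_id x).mul hf'.hasDerivAt).sub hf.hasDerivAt
  convert h using 1
  ring

/-- If `ψ` is `C²` on `(0,∞)` with `ψ'' ≥ 0`, `ψ(r) → 0` and `r ψ'(r) → 0` at infinity,
and `r ψ'(r)` has a finite limit at `0+`, then `u ↦ u ψ''(u)` is absolutely integrable
on `(0,∞)`. -/
theorem integrable_u_mul_second_deriv
    (ψ : ℝ → ℝ)
    (hcont : ContinuousOn ψ (Ici 0)) (h0 : ψ 0 = 1)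
    (hC2 : ContDiffOn ℝ 2 ψ (Ioi 0))
    (hconv : ∀ r > (0 : ℝ), 0 ≤ deriv (deriv ψ) r)
    (hlim : Tendsto ψ atTop (nhds 0))
    (hlim' : Tendsto (fun r => r * deriv ψ r) atTop (nhds 0))
    (hlim0 : ∃ L : ℝ, Tendsto (fun r => r * deriv ψ r) (nhdsWithin 0 (Ioi 0)) (nhds L)) :
    IntegrableOn (fun u => u * deriv (deriv ψ) u) (Ioi 0) := by
  obtain ⟨L, hL⟩ := hlim0
  have hψ0 : Tendsto ψ (𝓝[>] 0) (𝓝 1) :=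
    h0 ▸ (hcont 0 self_mem_Ici).tendsto.mono_left (nhdsWithin_mono 0 Ioi_subset_Ici_self)
  have hψ' : ContDiffOn ℝ 1 (deriv ψ) (Ioi 0) := hC2.deriv_of_isOpen isOpen_Ioi (by norm_num)
  -- `u ψ'(u) - ψ(u)` is an antiderivative of `u ψ''(u)`, with limits `L - 1` at `0⁺` and `0` at `∞`.
  refine integrableOn_Ioi_deriv_of_nonneg_of_tendsto_nhdsGT (hL.sub hψ0) (fun x hx => ?_)
    (fun x hx => mul_nonneg hx.le (hconv x hx))
    (by simpa using hlim'.sub hlim)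
  exact hasDerivAt_mul_deriv_sub
    ((hC2.differentiableOn two_ne_zero).differentiableAt (Ioi_mem_nhds hx))
    ((hψ'.differentiableOn one_ne_zero).differentiableAt (Ioi_mem_nhds hx))
end

section
/- Let ψ : [0,∞) → ℝ be continuous with ψ(0) = 1, three times continuously differentiable on (0,∞), and suppose that ψ''(r) ≥ r·ψ'''(r) for all r > 0, ψ(r) → 0, r·ψ'(r) → 0 and r²·ψ''(r) → 0 as r → ∞, and that lim_{r→0+} r·ψ'(r) and lim_{r→0+} r²·ψ''(r) exist and are finite. Then the function u ↦ u·ψ''(u) − u²·ψ'''(u) is (absolutely) integrable on (0,∞), i.e. ∫_0^∞ |u·ψ''(u) − u²·ψ'''(u)| du < ∞. -/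
/-!
The integrand is the derivative of `F(u) = 3 u ψ'(u) - u² ψ''(u) - 3 ψ(u)`, and it equals
`u (ψ''(u) - u ψ'''(u)) ≥ 0`. So `F` is monotone with finite limits at `0⁺` and at `∞`, and
a nonnegative derivative of such a function is integrable.
-/

open Set Filter MeasureTheory

theorem integrableOn_Ioi_deriv_of_nonneg_of_tendsto {g g' : ℝ → ℝ} {a l m : ℝ}
    (hga : Tendsto g (nhdsWithin a (Ioi a)) (nhds m))
    (hderiv : ∀ x ∈ Ioi a, HasDerivAt g (g' x) x) (g'pos : ∀ x ∈ Ioi a, 0 ≤ g' x)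
    (hg : Tendsto g atTop (nhds l)) : IntegrableOn g' (Ioi a) := by
  classical
  have hcont : ContinuousWithinAt (Function.update g a m) (Ici a) a := by
    rwa [continuousWithinAt_update_same, Ici_sdiff_left]
  refine integrableOn_Ioi_deriv_of_nonneg (l := l) hcont (fun x hx => ?_) g'pos ?_
  · refine (hderiv x hx).congr_of_eventuallyEq ?_
    filter_upwards [isOpen_Ioi.mem_nhds hx] with y hy
    exact Function.update_of_ne (ne_of_gt hy) _ _
  · refine hg.congr' ?_
    filter_upwards [eventually_gt_atTop a] with y hy
    exact (Function.update_of_ne (ne_of_gt hy) _ _).symm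

theorem ContDiffOn.hasDerivAt_deriv {f : ℝ → ℝ} {s : Set ℝ} {n : WithTop ℕ∞} {x : ℝ}
    (hf : ContDiffOn ℝ n f s) (hs : IsOpen s) (hn : n ≠ 0) (hx : x ∈ s) :
    HasDerivAt f (deriv f x) x :=
  ((hf.contDiffAt (hs.mem_nhds hx)).differentiableAt hn).hasDerivAt

theorem hasDerivAt_three_mul_mul_sub_sq_mul_sub {f f₁ f₂ : ℝ → ℝ} {f₃ x : ℝ}
    (h₀ : HasDerivAt f (f₁ x) x) (h₁ : HasDerivAt f₁ (f₂ x) x) (h₂ : HasDerivAt f₂ f₃ x) :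
    HasDerivAt (fun u => 3 * (u * f₁ u) - u ^ 2 * f₂ u - 3 * f u)
      (x * f₂ x - x ^ 2 * f₃) x := by
  refine (((((hasDerivAt_id' x).fun_mul h₁).const_mul 3).fun_sub
    ((hasDerivAt_pow 2 x).fun_mul h₂)).fun_sub (h₀.const_mul 3)).congr_deriv ?_
  norm_num
  ring

theorem integrable_u_mul_second_deriv_sub_sq_third_deriv_general
    (ψ : ℝ → ℝ)
    (hcont : ContinuousOn ψ (Ici 0))
    (hC3 : ContDiffOn ℝ 3 ψ (Ioi 0))
    (hconv : ∀ r > (0 : ℝ), r * deriv (deriv (deriv ψ)) r ≤ deriv (deriv ψ) r)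
    (hlim : Tendsto ψ atTop (nhds 0))
    (hlim' : Tendsto (fun r => r * deriv ψ r) atTop (nhds 0))
    (hlim'' : Tendsto (fun r => r ^ 2 * deriv (deriv ψ) r) atTop (nhds 0))
    (hlim0 : ∃ L : ℝ, Tendsto (fun r => r * deriv ψ r) (nhdsWithin 0 (Ioi 0)) (nhds L))
    (hlim0' : ∃ L : ℝ,
      Tendsto (fun r => r ^ 2 * deriv (deriv ψ) r) (nhdsWithin 0 (Ioi 0)) (nhds L)) :
    IntegrableOn (fun u => u * deriv (deriv ψ) u - u ^ 2 * deriv (deriv (deriv ψ)) u)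
      (Ioi 0) := by
  obtain ⟨L, hL⟩ := hlim0
  obtain ⟨L', hL'⟩ := hlim0'
  have hψ0 : Tendsto ψ (nhdsWithin 0 (Ioi 0)) (nhds (ψ 0)) :=
    (hcont 0 self_mem_Ici).tendsto.mono_left (nhdsWithin_mono 0 Ioi_subset_Ici_self)
  have hC2 := hC3.deriv_of_isOpen isOpen_Ioi (m := 2) (by norm_num)
  have hC1 := hC2.deriv_of_isOpen isOpen_Ioi (m := 1) (by norm_num)
  refine integrableOn_Ioi_deriv_of_nonneg_of_tendsto
    (((hL.const_mul 3).sub hL').sub (hψ0.const_mul 3))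
    (fun x hx => hasDerivAt_three_mul_mul_sub_sq_mul_sub
      (hC3.hasDerivAt_deriv isOpen_Ioi (by norm_num) hx)
      (hC2.hasDerivAt_deriv isOpen_Ioi (by norm_num) hx)
      (hC1.hasDerivAt_deriv isOpen_Ioi (by norm_num) hx))
    (fun x (hx : 0 < x) => ?_) (((hlim'.const_mul 3).sub hlim'').sub (hlim.const_mul 3))
  nlinarith [hconv x hx]

/-- If `ψ` is `C³` on `(0,∞)` with `ψ''(r) ≥ r ψ'''(r)`, `ψ(r) → 0`, `r ψ'(r) → 0` and
`r² ψ''(r) → 0` at infinity, and `r ψ'(r)` and `r² ψ''(r)` have finite limits at `0+`,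
then `u ↦ u ψ''(u) - u² ψ'''(u)` is absolutely integrable on `(0,∞)`. -/
theorem integrable_u_mul_second_deriv_sub_sq_third_deriv
    (ψ : ℝ → ℝ)
    (hcont : ContinuousOn ψ (Ici 0)) (h0 : ψ 0 = 1)
    (hC3 : ContDiffOn ℝ 3 ψ (Ioi 0))
    (hconv : ∀ r > (0 : ℝ), r * deriv (deriv (deriv ψ)) r ≤ deriv (deriv ψ) r)
    (hlim : Tendsto ψ atTop (nhds 0))
    (hlim' : Tendsto (fun r => r * deriv ψ r) atTop (nhds 0))
    (hlim'' : Tendsto (fun r => r ^ 2 * deriv (deriv ψ) r) atTop (nhds 0))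
    (hlim0 : ∃ L : ℝ, Tendsto (fun r => r * deriv ψ r) (nhdsWithin 0 (Ioi 0)) (nhds L))
    (hlim0' : ∃ L : ℝ,
      Tendsto (fun r => r ^ 2 * deriv (deriv ψ) r) (nhdsWithin 0 (Ioi 0)) (nhds L)) :
    IntegrableOn (fun u => u * deriv (deriv ψ) u - u ^ 2 * deriv (deriv (deriv ψ)) u)
      (Ioi 0) :=
  integrable_u_mul_second_deriv_sub_sq_third_deriv_general ψ hcont hC3 hconv hlim hlim' hlim'' hlim0
    hlim0'
end

section
/- Let ψ : (0,∞) → ℝ be three times continuously differentiable with ψ(u) → 0, u·ψ'(u) → 0 and u²·ψ''(u) → 0 as u → ∞, and suppose u ↦ u·ψ''(u) − u²·ψ'''(u) is integrable on (0,∞). Then for every r > 0 it holds that ∫_r^∞ (1 − 3r/(2u) + r³/(2u³))·(u·ψ''(u) − u²·ψ'''(u)) du = 3·ψ(r). -/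
/-!
Write `w(u) = 1 - 3r/(2u) + r³/(2u³) = (u - r)²(2u + r)/(2u³)`. The integrand `w · (uψ'' - u²ψ''')`
has the explicit primitive `F(u) = -3ψ(u) + 3(u - r)ψ'(u) - w(u) u² ψ''(u)`. Since `w(r) = 0`,
`F(r) = -3ψ(r)`; since `w(u) → 1`, the decay hypotheses give `F(u) → 0` as `u → ∞`; and since
`0 ≤ w ≤ 1` on `[r, ∞)`, the integrand is integrable there, so the improper fundamental theorem of
calculus applies.
-/

open Set Filter MeasureTheory Topology

noncomputable section

theorem tendsto_zero_of_tendsto_mul_atTop {f : ℝ → ℝ}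
    (hf : Tendsto (fun u => u * f u) atTop (𝓝 0)) :
    Tendsto f atTop (𝓝 0) := by
  have h := hf.mul tendsto_inv_atTop_zero
  rw [mul_zero] at h
  refine h.congr' ?_
  filter_upwards [eventually_ne_atTop 0] with u hu
  field_simp

def cubicWeight (r u : ℝ) : ℝ := 1 - 3 * r / (2 * u) + r ^ 3 / (2 * u ^ 3)

section cubicWeight

variable {r u : ℝ}

theorem cubicWeight_self (hr : r ≠ 0) : cubicWeight r r = 0 := by
  unfold cubicWeight
  field_simp
  ring

theorem cubicWeight_eq (hu : u ≠ 0) :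
    cubicWeight r u = (u - r) ^ 2 * (2 * u + r) / (2 * u ^ 3) := by
  unfold cubicWeight
  field_simp
  ring

theorem one_sub_cubicWeight_eq (hu : u ≠ 0) :
    1 - cubicWeight r u = r * (3 * u ^ 2 - r ^ 2) / (2 * u ^ 3) := by
  unfold cubicWeight
  field_simp
  ring

theorem abs_cubicWeight_le_one (hr : 0 ≤ r) (hru : r ≤ u) (hu : 0 < u) :
    |cubicWeight r u| ≤ 1 := by
  have hnonneg : 0 ≤ cubicWeight r u := by
    rw [cubicWeight_eq hu.ne']
    positivity
  have hle : 0 ≤ 1 - cubicWeight r u := by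
    rw [one_sub_cubicWeight_eq hu.ne']
    have : 0 ≤ 3 * u ^ 2 - r ^ 2 := by nlinarith
    positivity
  rw [abs_of_nonneg hnonneg]
  linarith

theorem continuousOn_cubicWeight (r : ℝ) : ContinuousOn (cubicWeight r) (Ioi 0) := by
  intro u hu
  have hu₀ : u ≠ 0 := ne_of_gt hu
  unfold cubicWeight
  fun_prop (disch := positivity)

theorem tendsto_cubicWeight_atTop (r : ℝ) : Tendsto (cubicWeight r) atTop (𝓝 1) := by
  have hinv : Tendsto (fun u : ℝ => u⁻¹) atTop (𝓝 0) := tendsto_inv_atTop_zero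
  have h := ((hinv.const_mul (3 * r / 2)).const_sub 1).add ((hinv.pow 3).const_mul (r ^ 3 / 2))
  norm_num at h
  refine h.congr fun u => ?_
  unfold cubicWeight
  ring

theorem integrableOn_cubicWeight_mul {g : ℝ → ℝ} (hr : 0 < r) (hg : IntegrableOn g (Ioi r)) :
    IntegrableOn (fun u => cubicWeight r u * g u) (Ioi r) :=
  hg.bdd_mul (((continuousOn_cubicWeight r).mono (Ioi_subset_Ioi hr.le)).aestronglyMeasurable
    measurableSet_Ioi)
    (ae_restrict_of_forall_mem measurableSet_Ioi fun u (hu : r < u) =>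
      abs_cubicWeight_le_one hr.le hu.le (hr.trans hu))

end cubicWeight

def cubicWeightPrimitive (ψ : ℝ → ℝ) (r u : ℝ) : ℝ :=
  -3 * ψ u + 3 * (u - r) * deriv ψ u - cubicWeight r u * u ^ 2 * deriv (deriv ψ) u

section cubicWeightPrimitive

variable {ψ : ℝ → ℝ} {r u : ℝ}

theorem cubicWeightPrimitive_self (hr : r ≠ 0) : cubicWeightPrimitive ψ r r = -3 * ψ r := by
  simp [cubicWeightPrimitive, cubicWeight_self hr]

theorem hasDerivAt_cubicWeightPrimitive (hu : u ≠ 0) (h₀ : DifferentiableAt ℝ ψ u)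
    (h₁ : DifferentiableAt ℝ (deriv ψ) u) (h₂ : DifferentiableAt ℝ (deriv (deriv ψ)) u) :
    HasDerivAt (cubicWeightPrimitive ψ r)
      (cubicWeight r u * (u * deriv (deriv ψ) u - u ^ 2 * deriv (deriv (deriv ψ)) u)) u := by
  have hw : HasDerivAt (fun x => cubicWeight r x * x ^ 2)
      (2 * u - 3 * r / 2 - r ^ 3 / (2 * u ^ 2)) u := by
    have h := ((hasDerivAt_pow 2 u).sub ((hasDerivAt_id u).const_mul (3 * r / 2))).add
      ((hasDerivAt_inv hu).const_mul (r ^ 3 / 2))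
    refine (h.congr_deriv ?_).congr_of_eventuallyEq ?_
    · field_simp
      ring
    · filter_upwards [eventually_ne_nhds hu] with x hx
      simp only [cubicWeight, Pi.add_apply, Pi.sub_apply, id]
      field_simp
  have h := ((h₀.hasDerivAt.const_mul (-3)).add
    ((((hasDerivAt_id u).sub_const r).const_mul 3).mul h₁.hasDerivAt)).sub
    (hw.mul h₂.hasDerivAt)
  refine h.congr_deriv ?_
  simp only [cubicWeight, id]
  field_simp
  ring

theorem tendsto_cubicWeightPrimitive_atTop (h₀ : Tendsto ψ atTop (𝓝 0))
    (h₁ : Tendsto (fun u => u * deriv ψ u) atTop (𝓝 0))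
    (h₂ : Tendsto (fun u => u ^ 2 * deriv (deriv ψ) u) atTop (𝓝 0)) :
    Tendsto (cubicWeightPrimitive ψ r) atTop (𝓝 0) := by
  have h := ((h₀.const_mul (-3)).add
    ((h₁.const_mul 3).sub ((tendsto_zero_of_tendsto_mul_atTop h₁).const_mul (3 * r)))).sub
    ((tendsto_cubicWeight_atTop r).mul h₂)
  simp only [mul_zero, sub_zero, add_zero] at h
  refine h.congr fun u => ?_
  simp only [cubicWeightPrimitive]
  ring

theorem continuousOn_cubicWeightPrimitive (hψ : ContDiffOn ℝ 2 ψ (Ioi 0)) :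
    ContinuousOn (cubicWeightPrimitive ψ r) (Ioi 0) := by
  have h₀ := hψ.continuousOn
  have h₁ := hψ.continuousOn_deriv_of_isOpen isOpen_Ioi (by norm_num)
  have h₂ := (hψ.deriv_of_isOpen (m := 1) isOpen_Ioi (by norm_num)).continuousOn_deriv_of_isOpen
    isOpen_Ioi le_rfl
  have hw := continuousOn_cubicWeight r
  unfold cubicWeightPrimitive
  fun_prop

end cubicWeightPrimitive

/-- For a function `ψ` that is `C³` on `(0,∞)` with `ψ(u) → 0`, `u ψ'(u) → 0` and
`u² ψ''(u) → 0` at infinity and `u ψ''(u) - u² ψ'''(u)` integrable, one has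
`∫_r^∞ (1 - 3r/(2u) + r³/(2u³)) (u ψ''(u) - u² ψ'''(u)) du = 3 ψ(r)` for all `r > 0`. -/
theorem integral_third_deriv_representation
    (ψ : ℝ → ℝ)
    (hC3 : ContDiffOn ℝ 3 ψ (Ioi 0))
    (hlim : Tendsto ψ atTop (nhds 0))
    (hlim' : Tendsto (fun u => u * deriv ψ u) atTop (nhds 0))
    (hlim'' : Tendsto (fun u => u ^ 2 * deriv (deriv ψ) u) atTop (nhds 0))
    (hint : IntegrableOn (fun u => u * deriv (deriv ψ) u - u ^ 2 * deriv (deriv (deriv ψ)) u)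
      (Ioi 0)) :
    ∀ r > (0 : ℝ),
      (∫ u in Ioi r, (1 - 3 * r / (2 * u) + r ^ 3 / (2 * u ^ 3)) *
        (u * deriv (deriv ψ) u - u ^ 2 * deriv (deriv (deriv ψ)) u)) = 3 * ψ r := by
  intro r hr
  have h₁ : ContDiffOn ℝ 2 (deriv ψ) (Ioi 0) := hC3.deriv_of_isOpen isOpen_Ioi (by norm_num)
  have h₂ : ContDiffOn ℝ 1 (deriv (deriv ψ)) (Ioi 0) := h₁.deriv_of_isOpen isOpen_Ioi (by norm_num)
  have hdiff {f : ℝ → ℝ} {n : WithTop ℕ∞} (hf : ContDiffOn ℝ n f (Ioi 0)) (hn : n ≠ 0) {u : ℝ}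
      (hu : r < u) : DifferentiableAt ℝ f u :=
    (hf.differentiableOn hn).differentiableAt (Ioi_mem_nhds (hr.trans hu))
  have hcont : ContinuousWithinAt (cubicWeightPrimitive ψ r) (Ici r) r :=
    ((continuousOn_cubicWeightPrimitive (hC3.of_le (by norm_num))).continuousAt
      (Ioi_mem_nhds hr)).continuousWithinAt
  change ∫ u in Ioi r, cubicWeight r u * _ = _
  rw [integral_Ioi_of_hasDerivAt_of_tendsto hcont
    (fun u hu => hasDerivAt_cubicWeightPrimitive (hr.trans hu).ne'
      (hdiff hC3 (by norm_num) hu) (hdiff h₁ (by norm_num) hu) (hdiff h₂ (by norm_num) hu))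
    (integrableOn_cubicWeight_mul hr (hint.mono_set (Ioi_subset_Ioi hr.le)))
    (tendsto_cubicWeightPrimitive_atTop hlim hlim' hlim''),
    cubicWeightPrimitive_self hr.ne']
  ring

end
end
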